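/- Slater's summation formula: let r ≥ 1 be an integer and let (α;β) = (α₁,…,α_{r+1};β₁,…,β_r) ∈ 𝒰_r be such that no β_i + 1 is a non-positive integer. Then Σ_{k=0}^∞ (α₁)_k⋯(α_{r+1})_k/((β₁+1)_k⋯(β_r+1)_k · k!) = Γ(β₁+1)⋯Γ(β_r+1)/(Γ(α₁+1)⋯Γ(α_{r+1}+1)), where a quotient of Gamma values with a denominator argument equal to a non-positive integer is interpreted as zero. (The series converges, being r-balanced, since its parametric excess Σ_i(β_i+1) − Σ_i α_i equals r > 0.) -/

import Mathlib

noncomputable def poch (a : ℂ) (k : ℕ) : ℂ := Polynomial.eval a (ascPochhammer ℂ k)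

noncomputable def esym {n : ℕ} (v : Fin n → ℂ) (l : ℕ) : ℂ :=
  ∑ t ∈ Finset.powersetCard l (Finset.univ : Finset (Fin n)), ∏ i ∈ t, v i

def inU (r : ℕ) (α : Fin (r+1) → ℂ) (β : Fin r → ℂ) : Prop :=
  ∀ l : ℕ, 1 ≤ l → l ≤ r → esym α l = esym β l

/-! Membership in `𝒰_r` says exactly that `∏ (αᵢ + x) = x ∏ (βᵢ + x) + ∏ αᵢ` identically in `x`.
At `x = N` this makes the series telescope: its `N`-th partial sum is
`∏ (αᵢ + 1)_N / (∏ (βᵢ + 1)_N · N!)`. Euler's limit formula `(z + 1)_N ~ N^z N! / Γ(z + 1)` and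
`∑ αᵢ = ∑ βᵢ` give the limit of the partial sums. The same closed form, divided by `∏ (αᵢ + N)`,
shows that the terms are `O(N^{-(r+1)})`, so the series converges absolutely. Since `Γ` vanishes
at its poles, the terminating cases need no separate treatment. -/

open Filter Topology Finset Asymptotics
open scoped Nat

lemma poch_zero (a : ℂ) : poch a 0 = 1 := by
  simp [poch]

lemma poch_succ_right (a : ℂ) (k : ℕ) : poch a (k + 1) = poch a k * (a + k) :=
  ascPochhammer_succ_eval k a

lemma poch_succ_left (a : ℂ) (k : ℕ) : poch a (k + 1) = a * poch (a + 1) k := by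
  simp [poch, ascPochhammer_succ_left, Polynomial.eval_comp]

lemma poch_eq_prod_range (a : ℂ) (k : ℕ) : poch a k = ∏ j ∈ range k, (a + j) := by
  induction k with
  | zero => simp [poch_zero]
  | succ k ih => rw [poch_succ_right, ih, prod_range_succ]

lemma poch_ne_zero {a : ℂ} (ha : ∀ m : ℕ, a ≠ -m) (k : ℕ) : poch a k ≠ 0 := by
  rw [poch, Ne, ascPochhammer_eval_eq_zero_iff]
  rintro ⟨m, -, hm⟩
  exact ha m (by rw [hm, neg_neg])

lemma poch_neg_natCast_of_lt {m k : ℕ} (h : m < k) : poch (-m) k = 0 :=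
  ascPochhammer_eval_neg_coe_nat_of_lt h

lemma cpow_sum {x : ℂ} (hx : x ≠ 0) {ι : Type*} (s : Finset ι) (f : ι → ℂ) :
    x ^ (∑ i ∈ s, f i) = ∏ i ∈ s, x ^ f i := by
  classical
  induction s using Finset.induction_on with
  | empty => simp
  | insert a s h ih => rw [sum_insert h, prod_insert h, Complex.cpow_add _ _ hx, ih]

theorem tendsto_poch_add_one_div_cpow_mul_factorial (z : ℂ) :
    Tendsto (fun N : ℕ => poch (z + 1) N / ((N : ℂ) ^ z * N !)) atTop
      (𝓝 (Complex.Gamma (z + 1))⁻¹) := by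
  by_cases hz : ∃ m : ℕ, z + 1 = -m
  · obtain ⟨m, hm⟩ := hz
    rw [hm, Complex.Gamma_neg_nat_eq_zero, inv_zero]
    refine tendsto_const_nhds.congr' ?_
    filter_upwards [eventually_gt_atTop m] with N hN
    rw [poch_neg_natCast_of_lt hN, zero_div]
  · push Not at hz
    have hratio := tendsto_natCast_div_add_atTop (z + 1)
    have hlim := ((Complex.GammaSeq_tendsto_Gamma (z + 1)).inv₀ (Complex.Gamma_ne_zero hz)).mul
      hratio
    rw [mul_one] at hlim
    refine hlim.congr' ?_
    filter_upwards [hratio.eventually_ne one_ne_zero] with N hN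
    obtain ⟨hN0, hNz⟩ : (N : ℂ) ≠ 0 ∧ (N : ℂ) + (z + 1) ≠ 0 := by
      simpa [not_or] using hN
    rw [Complex.GammaSeq, ← poch_eq_prod_range, poch_succ_right, Complex.cpow_add _ _ hN0,
      Complex.cpow_one]
    field_simp
    ring

lemma esym_zero {n : ℕ} (v : Fin n → ℂ) : esym v 0 = 1 := by
  simp [esym]

lemma esym_one {n : ℕ} (v : Fin n → ℂ) : esym v 1 = ∑ i, v i := by
  simp [esym, powersetCard_one]

lemma esym_self {n : ℕ} (v : Fin n → ℂ) : esym v n = ∏ i, v i := by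
  have h := powersetCard_self (univ : Finset (Fin n))
  rw [card_univ, Fintype.card_fin] at h
  simp [esym, h]

lemma prod_add_eq_sum_esym {n : ℕ} (v : Fin n → ℂ) (x : ℂ) :
    ∏ i, (v i + x) = ∑ l ∈ range (n + 1), esym v l * x ^ (n - l) := by
  rw [Finset.prod_add, sum_powerset, card_univ, Fintype.card_fin]
  refine sum_congr rfl fun l _ => ?_
  rw [esym, sum_mul]
  refine sum_congr rfl fun t ht => ?_
  rw [mem_powersetCard] at ht
  rw [prod_const, card_sdiff_of_subset ht.1, card_univ, Fintype.card_fin, ht.2]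

lemma prod_add_eq_of_inU {r : ℕ} {α : Fin (r + 1) → ℂ} {β : Fin r → ℂ} (hU : inU r α β)
    (x : ℂ) : ∏ i, (α i + x) = x * ∏ i, (β i + x) + ∏ i, α i := by
  have hesym : ∀ l ∈ range (r + 1), esym α l = esym β l := by
    intro l hl
    rcases Nat.eq_zero_or_pos l with rfl | hl0
    · rw [esym_zero, esym_zero]
    · exact hU l hl0 (Nat.lt_succ_iff.1 (mem_range.1 hl))
  rw [prod_add_eq_sum_esym, prod_add_eq_sum_esym, sum_range_succ, esym_self, Nat.sub_self,
    pow_zero, mul_one, mul_sum]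
  congr 1
  refine sum_congr rfl fun l hl => ?_
  rw [hesym l hl, Nat.sub_add_comm (Nat.lt_succ_iff.1 (mem_range.1 hl)), pow_succ]
  ring

lemma sum_eq_of_inU {r : ℕ} (hr : 1 ≤ r) {α : Fin (r + 1) → ℂ} {β : Fin r → ℂ}
    (hU : inU r α β) : ∑ i, α i = ∑ i, β i := by
  simpa only [esym_one] using hU 1 le_rfl hr

section Slater

variable {ι κ : Type*} [Fintype ι] [Fintype κ]

noncomputable def slaterTerm (α : ι → ℂ) (β : κ → ℂ) (k : ℕ) : ℂ :=
  (∏ i, poch (α i) k) / ((∏ i, poch (β i + 1) k) * (k ! : ℂ))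

lemma sum_range_slaterTerm {α : ι → ℂ} {β : κ → ℂ} (hβ : ∀ i, ∀ m : ℕ, β i + 1 ≠ -m)
    (hαβ : ∀ x, ∏ i, (α i + x) = x * ∏ i, (β i + x) + ∏ i, α i) (N : ℕ) :
    ∑ k ∈ range (N + 1), slaterTerm α β k
      = (∏ i, poch (α i + 1) N) / ((∏ i, poch (β i + 1) N) * N !) := by
  induction N with
  | zero => simp [slaterTerm, poch_zero]
  | succ N ih =>
    set x : ℂ := ((N + 1 : ℕ) : ℂ) with hx
    have hx0 : x ≠ 0 := Nat.cast_ne_zero.2 N.succ_ne_zero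
    have hα : ∏ i, poch (α i) (N + 1) = (∏ i, α i) * ∏ i, poch (α i + 1) N := by
      simp only [poch_succ_left, prod_mul_distrib]
    have hsucc (a : ℂ) : poch (a + 1) (N + 1) = poch (a + 1) N * (a + x) := by
      rw [poch_succ_right, hx]; push_cast; ring
    have hB : ∏ i, poch (β i + 1) (N + 1) ≠ 0 :=
      prod_ne_zero_iff.2 fun i _ => poch_ne_zero (hβ i) _
    simp only [hsucc, prod_mul_distrib, mul_ne_zero_iff] at hB
    rw [sum_range_succ, ih, slaterTerm, hα]
    simp only [hsucc, prod_mul_distrib]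
    rw [hαβ, Nat.factorial_succ, Nat.cast_mul, ← hx]
    field_simp [hB.1, hB.2, Nat.factorial_ne_zero]

lemma slaterTerm_mul_prod_add (α : ι → ℂ) (β : κ → ℂ) (N : ℕ) :
    slaterTerm α β N * ∏ i, (α i + N)
      = (∏ i, α i) * ((∏ i, poch (α i + 1) N) / ((∏ i, poch (β i + 1) N) * N !)) := by
  rw [slaterTerm, div_mul_eq_mul_div, ← prod_mul_distrib]
  simp only [← poch_succ_right, poch_succ_left, prod_mul_distrib, mul_div_assoc]

theorem tendsto_prod_poch_div_prod_poch {α : ι → ℂ} {β : κ → ℂ}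
    (hcard : Fintype.card ι = Fintype.card κ + 1) (hsum : ∑ i, α i = ∑ i, β i)
    (hβ : ∀ i, ∀ m : ℕ, β i + 1 ≠ -m) :
    Tendsto (fun N : ℕ => (∏ i, poch (α i + 1) N) / ((∏ i, poch (β i + 1) N) * N !)) atTop
      (𝓝 ((∏ i, Complex.Gamma (β i + 1)) / ∏ i, Complex.Gamma (α i + 1))) := by
  have hlim := (tendsto_finsetProd univ fun i _ =>
    tendsto_poch_add_one_div_cpow_mul_factorial (α i)).div
    (tendsto_finsetProd univ fun i _ => tendsto_poch_add_one_div_cpow_mul_factorial (β i))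
    (prod_ne_zero_iff.2 fun i _ => inv_ne_zero (Complex.Gamma_ne_zero (hβ i)))
  rw [prod_inv_distrib, prod_inv_distrib, inv_div_inv] at hlim
  refine hlim.congr' ?_
  filter_upwards [eventually_ne_atTop 0] with N hN
  have hN0 : (N : ℂ) ≠ 0 := Nat.cast_ne_zero.2 hN
  simp only [Pi.div_apply, prod_div_distrib, prod_mul_distrib, prod_const, card_univ,
    ← cpow_sum hN0, hsum, hcard, pow_succ]
  have hX : (N : ℂ) ^ ∑ i, β i ≠ 0 := Complex.cpow_ne_zero_iff.2 (Or.inl hN0)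
  field_simp [Nat.factorial_ne_zero]

theorem summable_of_isBigO_mul_prod_add {f : ℕ → ℂ} {a : ι → ℂ} (hcard : 2 ≤ Fintype.card ι)
    (hf : (fun N : ℕ => f N * ∏ i, (a i + N)) =O[atTop] fun _ => (1 : ℂ)) : Summable f := by
  have hratio : Tendsto (fun N : ℕ => (N : ℂ) ^ Fintype.card ι / ∏ i, (a i + N)) atTop
      (𝓝 1) := by
    simpa [prod_div_distrib, add_comm] using
      tendsto_finsetProd univ fun i _ => tendsto_natCast_div_add_atTop (a i)
  have hbig : f =O[atTop] fun N : ℕ => ((N : ℂ) ^ Fintype.card ι)⁻¹ := by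
    refine ((hf.mul (hratio.isBigO_one ℂ)).mul
      (isBigO_refl (fun N : ℕ => ((N : ℂ) ^ Fintype.card ι)⁻¹) atTop)).congr' ?_
      (Eventually.of_forall fun N => by simp)
    filter_upwards [hratio.eventually_ne one_ne_zero] with N hN
    obtain ⟨hN0, hP⟩ := div_ne_zero_iff.1 hN
    field_simp
  refine summable_of_isBigO_nat' (Real.summable_one_div_nat_pow.2 hcard) ?_
  simpa using isBigO_norm_right.2 hbig

end Slater

/-- Slater's summation formula (Theorem thm:slater). -/
theorem slater_summation
    (r : ℕ) (hr : 1 ≤ r) (α : Fin (r+1) → ℂ) (β : Fin r → ℂ)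
    (hU : inU r α β)
    (hβ : ∀ i : Fin r, ∀ m : ℕ, β i + 1 ≠ -(m : ℂ)) :
    ∑' k : ℕ, (∏ i, poch (α i) k) / ((∏ i, poch (β i + 1) k) * (k.factorial : ℂ))
      = (∏ i, Complex.Gamma (β i + 1)) / (∏ i, Complex.Gamma (α i + 1)) := by
  have hpartial := sum_range_slaterTerm hβ (prod_add_eq_of_inU hU)
  have hlim : Tendsto (fun N => ∑ k ∈ range (N + 1), slaterTerm α β k) atTop
      (𝓝 ((∏ i, Complex.Gamma (β i + 1)) / ∏ i, Complex.Gamma (α i + 1))) := by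
    simpa only [hpartial] using
      tendsto_prod_poch_div_prod_poch (by simp) (sum_eq_of_inU hr hU) hβ
  have hsummable : Summable (slaterTerm α β) := by
    refine summable_of_isBigO_mul_prod_add (a := α) (by simpa using hr) ?_
    simpa only [slaterTerm_mul_prod_add, ← hpartial] using
      (hlim.const_mul (∏ i, α i)).isBigO_one ℂ
  exact tendsto_nhds_unique
    (hsummable.hasSum.tendsto_sum_nat.comp (tendsto_add_atTop_nat 1)) hlim
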